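/- arXiv:1208.0861 — 2 statements merged into one kernel-verified Lean document; each statement's English description precedes it below -/
import Mathlib

section
/- If one adds to intuitionistic natural deduction the unrestricted existential instantiation rule (from Γ ⊢ ∃x A(x) conclude Γ ⊢ A(a) for a fresh constant a), then the intuitionistically underivable formula (C → ∃x A(x)) → ∃x (C → A(x)) becomes derivable. -/
/-- Terms of first-order logic without function symbols: variables (de Bruijn) and
constants. -/
inductive Tm0 : Type
  | var : Nat → Tm0
  | const : Nat → Tm0
  deriving DecidableEq

/-- First-order formulas (de Bruijn indices for bound variables). -/
inductive Fm0 : Type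
  | atom : Nat → List Tm0 → Fm0
  | bot : Fm0
  | and : Fm0 → Fm0 → Fm0
  | or : Fm0 → Fm0 → Fm0
  | imp : Fm0 → Fm0 → Fm0
  | all : Fm0 → Fm0
  | ex : Fm0 → Fm0
  deriving DecidableEq

/-- Shift de Bruijn variables ≥ c by one. -/
def Tm0.lift (c : Nat) : Tm0 → Tm0
  | .var n => if n < c then .var n else .var (n+1)
  | .const k => .const k

def Fm0.lift : Nat → Fm0 → Fm0
  | c, .atom p ts => .atom p (ts.map (Tm0.lift c))
  | _, .bot => .bot
  | c, .and A B => .and (Fm0.lift c A) (Fm0.lift c B)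
  | c, .or A B => .or (Fm0.lift c A) (Fm0.lift c B)
  | c, .imp A B => .imp (Fm0.lift c A) (Fm0.lift c B)
  | c, .all A => .all (Fm0.lift (c+1) A)
  | c, .ex A => .ex (Fm0.lift (c+1) A)

/-- Substitute `s` for variable `m` (variables above `m` are decremented). -/
def Tm0.subst (m : Nat) (s : Tm0) : Tm0 → Tm0
  | .var n => if n < m then .var n else if n = m then s else .var (n-1)
  | .const k => .const k

def Fm0.subst : Nat → Tm0 → Fm0 → Fm0
  | m, s, .atom p ts => .atom p (ts.map (Tm0.subst m s))
  | _, _, .bot => .bot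
  | m, s, .and A B => .and (Fm0.subst m s A) (Fm0.subst m s B)
  | m, s, .or A B => .or (Fm0.subst m s A) (Fm0.subst m s B)
  | m, s, .imp A B => .imp (Fm0.subst m s A) (Fm0.subst m s B)
  | m, s, .all A => .all (Fm0.subst (m+1) (Tm0.lift 0 s) A)
  | m, s, .ex A => .ex (Fm0.subst (m+1) (Tm0.lift 0 s) A)

/-- `A.subst0 t` substitutes `t` for the outermost bound variable. -/
def Fm0.subst0 (A : Fm0) (t : Tm0) : Fm0 := Fm0.subst 0 t A

/-- Occurrence of a constant in a term. -/
def Tm0.hasConst (k : Nat) : Tm0 → Prop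
  | .var _ => False
  | .const m => m = k

/-- Occurrence of a constant in a formula. -/
def Fm0.hasConst : Nat → Fm0 → Prop
  | k, .atom _ ts => ∃ t ∈ ts, Tm0.hasConst k t
  | _, .bot => False
  | k, .and A B => Fm0.hasConst k A ∨ Fm0.hasConst k B
  | k, .or A B => Fm0.hasConst k A ∨ Fm0.hasConst k B
  | k, .imp A B => Fm0.hasConst k A ∨ Fm0.hasConst k B
  | k, .all A => Fm0.hasConst k A
  | k, .ex A => Fm0.hasConst k A

/-- Intuitionistic natural deduction NJ for first-order predicate logic. -/
inductive NJ0 : Set Fm0 → Fm0 → Prop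
  | ax {Γ A} : A ∈ Γ → NJ0 Γ A
  | botE {Γ A} : NJ0 Γ .bot → NJ0 Γ A
  | andI {Γ A B} : NJ0 Γ A → NJ0 Γ B → NJ0 Γ (.and A B)
  | andE₁ {Γ A B} : NJ0 Γ (.and A B) → NJ0 Γ A
  | andE₂ {Γ A B} : NJ0 Γ (.and A B) → NJ0 Γ B
  | orI₁ {Γ A B} : NJ0 Γ A → NJ0 Γ (.or A B)
  | orI₂ {Γ A B} : NJ0 Γ B → NJ0 Γ (.or A B)
  | orE {Γ A B C} : NJ0 Γ (.or A B) → NJ0 (insert A Γ) C → NJ0 (insert B Γ) C →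
      NJ0 Γ C
  | impI {Γ A B} : NJ0 (insert A Γ) B → NJ0 Γ (.imp A B)
  | impE {Γ A B} : NJ0 Γ (.imp A B) → NJ0 Γ A → NJ0 Γ B
  | allI {Γ A} : NJ0 (Fm0.lift 0 '' Γ) A → NJ0 Γ (.all A)
  | allE {Γ A} (t) : NJ0 Γ (.all A) → NJ0 Γ (A.subst0 t)
  | exI {Γ A} (t) : NJ0 Γ (A.subst0 t) → NJ0 Γ (.ex A)
  | exE {Γ A C} : NJ0 Γ (.ex A) → NJ0 (insert A (Fm0.lift 0 '' Γ)) (Fm0.lift 0 C) →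
      NJ0 Γ C

/-- Intuitionistic natural deduction NJ extended by the unrestricted existential
instantiation rule: from `Γ ⊢ ∃x A(x)` conclude `Γ ⊢ A(a)` for a constant `a`
occurring nowhere in `Γ` or `A`. -/
inductive NJEI : Set Fm0 → Fm0 → Prop
  | ax {Γ A} : A ∈ Γ → NJEI Γ A
  | botE {Γ A} : NJEI Γ .bot → NJEI Γ A
  | andI {Γ A B} : NJEI Γ A → NJEI Γ B → NJEI Γ (.and A B)
  | andE₁ {Γ A B} : NJEI Γ (.and A B) → NJEI Γ A
  | andE₂ {Γ A B} : NJEI Γ (.and A B) → NJEI Γ B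
  | orI₁ {Γ A B} : NJEI Γ A → NJEI Γ (.or A B)
  | orI₂ {Γ A B} : NJEI Γ B → NJEI Γ (.or A B)
  | orE {Γ A B C} : NJEI Γ (.or A B) → NJEI (insert A Γ) C → NJEI (insert B Γ) C →
      NJEI Γ C
  | impI {Γ A B} : NJEI (insert A Γ) B → NJEI Γ (.imp A B)
  | impE {Γ A B} : NJEI Γ (.imp A B) → NJEI Γ A → NJEI Γ B
  | allI {Γ A} : NJEI (Fm0.lift 0 '' Γ) A → NJEI Γ (.all A)
  | allE {Γ A} (t) : NJEI Γ (.all A) → NJEI Γ (A.subst0 t)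
  | exI {Γ A} (t) : NJEI Γ (A.subst0 t) → NJEI Γ (.ex A)
  | exE {Γ A C} : NJEI Γ (.ex A) → NJEI (insert A (Fm0.lift 0 '' Γ)) (Fm0.lift 0 C) →
      NJEI Γ C
  | ei {Γ A} (a : Nat) : NJEI Γ (.ex A) → (∀ F ∈ Γ, ¬ Fm0.hasConst a F) →
      (¬ Fm0.hasConst a A) → NJEI Γ (A.subst0 (.const a))

/-- The propositional atom `C`. -/
def Catom : Fm0 := .atom 0 []
/-- The atomic formula `A(x)` for the unary predicate `A`. -/
def Aof (t : Tm0) : Fm0 := .atom 1 [t]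

/-- with the unrestricted existential instantiation rule added to NJ,
the intuitionistically underivable formula `(C → ∃x A(x)) → ∃x (C → A(x))` becomes
derivable. -/
theorem shift_formula_derivable_with_EI :
    NJEI ∅ (.imp (.imp Catom (.ex (Aof (.var 0)))) (.ex (.imp Catom (Aof (.var 0))))) := by
  apply NJEI.impI
  apply NJEI.exI (Tm0.const 0)
  show NJEI _ (.imp Catom (Aof (.const 0)))
  apply NJEI.impI
  have h : NJEI (insert Catom (insert (Fm0.imp Catom (.ex (Aof (.var 0)))) ∅))
      ((Aof (.var 0)).subst0 (.const 0)) := by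
    apply NJEI.ei 0
    · exact NJEI.impE (A := Catom) (NJEI.ax (by simp)) (NJEI.ax (by simp))
    · rintro F hF
      simp [Set.mem_insert_iff] at hF
      rcases hF with rfl | rfl <;> simp [Catom, Aof, Fm0.hasConst, Tm0.hasConst]
    · simp [Aof, Fm0.hasConst, Tm0.hasConst]
  exact h
end

section
/- (Element duplication) Given a Kripke model for IPC on a tree frame without leaf worlds, a fixed element e of the root domain, and a fresh element e_w added to D(w) (and not to D(w⁻)) at each world w, with atomic forcing defined by identifying each e_w with e, the resulting model forces exactly the same formulas (with parameters from the original domains) at each world as the original model. -/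
/-- Extend an environment by one value (for de Bruijn variable 0). -/
def consEnv {Dom : Type} (d : Dom) (ρ : Nat → Dom) : Nat → Dom
  | 0 => d
  | n+1 => ρ n

/-- Evaluation of a term under environment `ρ` and constant interpretation `I`. -/
def Tm0.eval {Dom : Type} (I : Nat → Dom) (ρ : Nat → Dom) : Tm0 → Dom
  | .var n => ρ n
  | .const k => I k

/-- Kripke forcing for intuitionistic first-order predicate logic. -/
def force0 {W Dom : Type} (le : W → W → Prop) (D : W → Set Dom) (I : Nat → Dom)
    (atomF : W → Nat → List Dom → Prop) : W → (Nat → Dom) → Fm0 → Prop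
  | w, ρ, .atom p ts => atomF w p (ts.map (Tm0.eval I ρ))
  | _, _, .bot => False
  | w, ρ, .and A B => force0 le D I atomF w ρ A ∧ force0 le D I atomF w ρ B
  | w, ρ, .or A B => force0 le D I atomF w ρ A ∨ force0 le D I atomF w ρ B
  | w, ρ, .imp A B => ∀ w', le w w' → force0 le D I atomF w' ρ A →
      force0 le D I atomF w' ρ B
  | w, ρ, .all A => ∀ w', le w w' → ∀ d ∈ D w', force0 le D I atomF w' (consEnv d ρ) A
  | w, ρ, .ex A => ∃ d ∈ D w, force0 le D I atomF w (consEnv d ρ) A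

/-- A standard intuitionistic Kripke model: partial order, monotone nonempty domains,
constants everywhere defined, monotone atomic forcing. -/
def IsKModel {W Dom : Type} (le : W → W → Prop) (D : W → Set Dom) (I : Nat → Dom)
    (atomF : W → Nat → List Dom → Prop) : Prop :=
  (∀ w, le w w) ∧ (∀ {u v w}, le u v → le v w → le u w) ∧
  (∀ {u v}, le u v → le v u → u = v) ∧
  (∀ w, (D w).Nonempty) ∧ (∀ {w w'}, le w w' → D w ⊆ D w') ∧
  (∀ w k, I k ∈ D w) ∧
  (∀ {w w'}, le w w' → ∀ p ds, atomF w p ds → atomF w' p ds)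

theorem dup_eval {W Dom : Type} (I : Nat → Dom) (e : Dom) (ρ' : Nat → Dom ⊕ W)
    (t : Tm0) :
    Sum.elim id (fun _ => e) (Tm0.eval (fun k => Sum.inl (I k)) ρ' t)
      = Tm0.eval I (fun n => Sum.elim id (fun _ => e) (ρ' n)) t := by
  cases t <;> rfl

theorem dup_force {W Dom : Type} (le : W → W → Prop) (root : W)
    (D : W → Set Dom) (I : Nat → Dom) (atomF : W → Nat → List Dom → Prop)
    (hM : IsKModel le D I atomF)
    (hroot : ∀ w, le root w)
    (e : Dom) (he : e ∈ D root) :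
    ∀ (A : Fm0) (w : W) (ρ' : Nat → Dom ⊕ W),
      force0 le
        (fun w => Sum.inl '' D w ∪ Sum.inr '' {v | le v w})
        (fun k => Sum.inl (I k))
        (fun w p ds => atomF w p (ds.map (Sum.elim id (fun _ => e))))
        w ρ' A
      ↔ force0 le D I atomF w (fun n => Sum.elim id (fun _ => e) (ρ' n)) A := by
  obtain ⟨hrefl, htrans, hanti, hne, hmono, hconst, hatom⟩ := hM
  have hπ : ∀ (w : W) (d : Dom ⊕ W),
      d ∈ Sum.inl '' D w ∪ Sum.inr '' {v | le v w} →
        Sum.elim id (fun _ => e) d ∈ D w := by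
    rintro w d (⟨x, hx, rfl⟩ | ⟨v, hv, rfl⟩)
    · exact hx
    · exact hmono (hroot w) he
  have hcons : ∀ (d : Dom ⊕ W) (ρ' : Nat → Dom ⊕ W),
      (fun n => Sum.elim id (fun _ => e) (consEnv d ρ' n))
        = consEnv (Sum.elim id (fun _ => e) d)
            (fun n => Sum.elim id (fun _ => e) (ρ' n)) := by
    intro d ρ'; funext n; cases n <;> rfl
  intro A
  induction A with
  | atom p ts =>
    intro w ρ'
    simp only [force0, List.map_map]
    have : ts.map ((Sum.elim id fun _ => e) ∘ Tm0.eval (fun k => Sum.inl (I k)) ρ')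
        = ts.map (Tm0.eval I fun n => Sum.elim id (fun _ => e) (ρ' n)) :=
      List.map_congr_left fun t _ => dup_eval I e ρ' t
    rw [this]
  | bot => intro w ρ'; exact Iff.rfl
  | and A B ihA ihB =>
    intro w ρ'
    exact and_congr (ihA w ρ') (ihB w ρ')
  | or A B ihA ihB =>
    intro w ρ'
    exact or_congr (ihA w ρ') (ihB w ρ')
  | imp A B ihA ihB =>
    intro w ρ'
    constructor
    · intro h w' hw hA
      exact (ihB w' ρ').mp (h w' hw ((ihA w' ρ').mpr hA))
    · intro h w' hw hA
      exact (ihB w' ρ').mpr (h w' hw ((ihA w' ρ').mp hA))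
  | all A ihA =>
    intro w ρ'
    constructor
    · intro h w' hw d hd
      have := h w' hw (Sum.inl d) (Or.inl ⟨d, hd, rfl⟩)
      have := (ihA w' (consEnv (Sum.inl d) ρ')).mp this
      rwa [hcons] at this
    · intro h w' hw d' hd'
      have := h w' hw (Sum.elim id (fun _ => e) d') (hπ w' d' hd')
      rw [ihA w' (consEnv d' ρ'), hcons]
      exact this
  | ex A ihA =>
    intro w ρ'
    constructor
    · rintro ⟨d', hd', hf⟩
      refine ⟨Sum.elim id (fun _ => e) d', hπ w d' hd', ?_⟩
      have := (ihA w (consEnv d' ρ')).mp hf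
      rwa [hcons] at this
    · rintro ⟨d, hd, hf⟩
      refine ⟨Sum.inl d, Or.inl ⟨d, hd, rfl⟩, ?_⟩
      rw [ihA w (consEnv (Sum.inl d) ρ'), hcons]
      exact hf

/-- Element duplication: given a Kripke model for IPC on a tree frame
without leaf worlds, a fixed element `e` of the root domain, and a fresh duplicate
`e_w := Sum.inr w` added to the domain of each world `w` (and of no earlier world),
with atomic forcing defined by identifying each `e_w` with `e` via the collapse map
`c⁻`, the resulting model forces exactly the same formulas (with parameters from the
original domains) at each world as the original model. -/
theorem element_duplication {W Dom : Type} (le : W → W → Prop) (root : W)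
    (D : W → Set Dom) (I : Nat → Dom) (atomF : W → Nat → List Dom → Prop)
    (hM : IsKModel le D I atomF)
    (hroot : ∀ w, le root w)
    (htree : ∀ u v w, le u w → le v w → le u v ∨ le v u)
    (hnoleaf : ∀ w, ∃ w', le w w' ∧ w ≠ w')
    (e : Dom) (he : e ∈ D root) :
    -- the duplicated model: domain `Dom ⊕ W`, `e_w = Sum.inr w`
    ∀ (w : W) (A : Fm0) (ρ : Nat → Dom),
      force0 le
        (fun w => Sum.inl '' D w ∪ Sum.inr '' {v | le v w})
        (fun k => Sum.inl (I k))
        (fun w p ds => atomF w p (ds.map (Sum.elim id (fun _ => e))))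
        w (fun n => Sum.inl (ρ n)) A
      ↔ force0 le D I atomF w ρ A := by
  intro w A ρ
  have h := dup_force le root D I atomF hM hroot e he A w (fun n => Sum.inl (ρ n))
  simpa using h
end
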